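/- For x₁ ≤ x₂ ≤ ... ≤ xₙ in [a,b], and for any two circular n-permutations σ, τ with the same pinnacle set and the same vale set, the products ∏_{i=1}^n G(x_{σ(i)}, x_{σ(i+1)}) and ∏_{i=1}^n G(x_{τ(i)}, x_{τ(i+1)}) are equal, where G(s,t) = -(1/W)·ψ₋(min{s,t})·ψ₊(max{s,t}). -/

import Mathlib

set_option autoImplicit false

/-- The set of pinnacle values of the circular `n`-permutation `σ` (as positions' values
in `Fin n`, which is order-isomorphic to `{1, …, n}`). -/
def pinnacleSet (n : ℕ) (σ : Equiv.Perm (Fin n)) : Finset (Fin n) :=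
  (Finset.univ.filter fun i : Fin n =>
      σ ((finRotate n).symm i) < σ i ∧ σ (finRotate n i) < σ i).image σ

/-- The set of vale values of the circular `n`-permutation `σ`. -/
def valeSet (n : ℕ) (σ : Equiv.Perm (Fin n)) : Finset (Fin n) :=
  (Finset.univ.filter fun i : Fin n =>
      σ i < σ ((finRotate n).symm i) ∧ σ i < σ (finRotate n i)).image σ

/-!
Read a circular arrangement on values, through its successor map `e`. Neighbouring values are
distinct, so a value `j` is the minimum of as many of its two edges `{e⁻¹ j, j}`, `{j, e j}` as it
has larger neighbours: two for a vale, none for a pinnacle, one otherwise. Hence the product of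
`g` over the cyclic minima is the product over the non-pinnacles times the product over the
vales, and dually for maxima; both depend only on the pinnacle and vale sets. Monotonicity of `x`
makes `G (x s) (x t)` a function of `min s t` and `max s t`.
-/

open Finset

section LinearOrder

variable {α M : Type*} [Fintype α] [LinearOrder α] [CommMonoid M]

theorem prod_min_apply_eq_prod_filter_mul (e : Equiv.Perm α) (he : ∀ j, e j ≠ j) (g : α → M) :
    ∏ j, g (min j (e j)) =
      (∏ j with j < e j, g j) * ∏ j with j < e⁻¹ j, g j := by
  have hlt : ∀ j, ¬ j < e j ↔ e j < j := fun j => by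
    rw [not_lt]; exact (he j).le_iff_lt
  calc ∏ j, g (min j (e j))
      = ∏ j, if j < e j then g j else g (e j) := by
        refine prod_congr rfl fun j _ => ?_
        split_ifs with h
        · rw [min_eq_left h.le]
        · rw [min_eq_right ((hlt j).1 h).le]
    _ = (∏ j with j < e j, g j) * ∏ j with ¬ j < e j, g (e j) := prod_ite _ _
    _ = (∏ j with j < e j, g j) * ∏ j with j < e⁻¹ j, g j := by
        congr 1
        exact prod_equiv e (fun j => by simp [hlt]) (fun _ _ => rfl)

theorem prod_min_apply_eq_prod_compl_mul (e : Equiv.Perm α) (he : ∀ j, e j ≠ j) (g : α → M) :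
    ∏ j, g (min j (e j)) =
      (∏ j ∈ ({j | e⁻¹ j < j ∧ e j < j} : Finset α)ᶜ, g j) *
        ∏ j with j < e⁻¹ j ∧ j < e j, g j := by
  have heinv : ∀ j, e⁻¹ j ≠ j := fun j h => he j (by simpa using congrArg e h.symm)
  have hcompl :
      ({j | e⁻¹ j < j ∧ e j < j} : Finset α)ᶜ = ({j | j < e⁻¹ j ∨ j < e j} : Finset α) := by
    ext j
    simp only [mem_compl, mem_filter, mem_univ, true_and, not_and_or, not_lt,
      (heinv j).symm.le_iff_lt, (he j).symm.le_iff_lt]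
  rw [prod_min_apply_eq_prod_filter_mul e he, hcompl, filter_or, filter_and, mul_comm,
    prod_union_inter, mul_comm]

theorem prod_max_apply_eq_prod_compl_mul (e : Equiv.Perm α) (he : ∀ j, e j ≠ j) (g : α → M) :
    ∏ j, g (max j (e j)) =
      (∏ j ∈ ({j | j < e⁻¹ j ∧ j < e j} : Finset α)ᶜ, g j) *
        ∏ j with e⁻¹ j < j ∧ e j < j, g j :=
  prod_min_apply_eq_prod_compl_mul (α := αᵒᵈ) e he g

end LinearOrder

section Circular

variable {n : ℕ}

def circularSucc (σ : Equiv.Perm (Fin n)) : Equiv.Perm (Fin n) :=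
  σ * finRotate n * σ⁻¹

theorem circularSucc_apply (σ : Equiv.Perm (Fin n)) (j : Fin n) :
    circularSucc σ j = σ (finRotate n (σ.symm j)) :=
  rfl

theorem circularSucc_inv_apply (σ : Equiv.Perm (Fin n)) (j : Fin n) :
    (circularSucc σ)⁻¹ j = σ ((finRotate n).symm (σ.symm j)) :=
  rfl

theorem circularSucc_apply_ne (hn : 2 ≤ n) (σ : Equiv.Perm (Fin n)) (j : Fin n) :
    circularSucc σ j ≠ j := fun h => by
  have hrot : finRotate n (σ.symm j) ≠ σ.symm j :=
    Equiv.Perm.mem_support.1 (support_finRotate_of_le hn ▸ mem_univ _)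
  exact hrot (σ.injective (h.trans (σ.apply_symm_apply j).symm))

theorem prod_finRotate_eq_prod_circularSucc {M : Type*} [CommMonoid M]
    (σ : Equiv.Perm (Fin n)) (F : Fin n → Fin n → M) :
    ∏ i, F (σ i) (σ (finRotate n i)) = ∏ j, F j (circularSucc σ j) := by
  rw [← Equiv.prod_comp σ (fun j => F j (circularSucc σ j))]
  simp only [circularSucc_apply, Equiv.symm_apply_apply]

theorem valeSet_eq_filter (σ : Equiv.Perm (Fin n)) :
    valeSet n σ = ({j | j < (circularSucc σ)⁻¹ j ∧ j < circularSucc σ j} : Finset (Fin n)) := by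
  rw [valeSet, ← Equiv.coe_toEmbedding, ← map_eq_image, map_filter, map_univ_equiv]
  exact filter_congr fun j _ => by simp [circularSucc_apply, circularSucc_inv_apply]

theorem pinnacleSet_eq_filter (σ : Equiv.Perm (Fin n)) :
    pinnacleSet n σ = ({j | (circularSucc σ)⁻¹ j < j ∧ circularSucc σ j < j} : Finset (Fin n)) := by
  rw [pinnacleSet, ← Equiv.coe_toEmbedding, ← map_eq_image, map_filter, map_univ_equiv]
  exact filter_congr fun j _ => by simp [circularSucc_apply, circularSucc_inv_apply]

theorem prod_min_finRotate_eq {M : Type*} [CommMonoid M] (hn : 2 ≤ n)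
    (σ : Equiv.Perm (Fin n)) (g : Fin n → M) :
    ∏ i, g (min (σ i) (σ (finRotate n i))) =
      (∏ j ∈ (pinnacleSet n σ)ᶜ, g j) * ∏ j ∈ valeSet n σ, g j := by
  rw [prod_finRotate_eq_prod_circularSucc σ (fun s t => g (min s t)),
    prod_min_apply_eq_prod_compl_mul _ (circularSucc_apply_ne hn σ), pinnacleSet_eq_filter,
    valeSet_eq_filter]

theorem prod_max_finRotate_eq {M : Type*} [CommMonoid M] (hn : 2 ≤ n)
    (σ : Equiv.Perm (Fin n)) (g : Fin n → M) :
    ∏ i, g (max (σ i) (σ (finRotate n i))) =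
      (∏ j ∈ (valeSet n σ)ᶜ, g j) * ∏ j ∈ pinnacleSet n σ, g j := by
  rw [prod_finRotate_eq_prod_circularSucc σ (fun s t => g (max s t)),
    prod_max_apply_eq_prod_compl_mul _ (circularSucc_apply_ne hn σ), pinnacleSet_eq_filter,
    valeSet_eq_filter]

end Circular

theorem cyclic_products_eq_of_same_pinnacles_vales_general
    (n : ℕ) (x : Fin n → ℝ) (hx : Monotone x)
    (ψm ψp : ℝ → ℝ) (W : ℝ)
    (G : ℝ → ℝ → ℝ)
    (hG : ∀ s t, G s t = -(1 / W) * ψm (min s t) * ψp (max s t))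
    (σ τ : Equiv.Perm (Fin n))
    (hP : pinnacleSet n σ = pinnacleSet n τ) (hV : valeSet n σ = valeSet n τ) :
    ∏ i : Fin n, G (x (σ i)) (x (σ (finRotate n i)))
      = ∏ i : Fin n, G (x (τ i)) (x (τ (finRotate n i))) := by
  rcases Nat.lt_or_ge n 2 with hn | hn
  · have : Subsingleton (Fin n) := Fin.subsingleton_iff_le_one.2 (by omega)
    rw [Subsingleton.elim σ τ]
  have hfactor : ∀ ρ : Equiv.Perm (Fin n), ∏ i, G (x (ρ i)) (x (ρ (finRotate n i))) =
      (-(1 / W)) ^ n * (∏ i, ψm (x (min (ρ i) (ρ (finRotate n i))))) *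
        ∏ i, ψp (x (max (ρ i) (ρ (finRotate n i)))) := fun ρ => by
    simp only [hG, ← hx.map_min, ← hx.map_max, prod_mul_distrib, prod_const, card_univ,
      Fintype.card_fin]
  rw [hfactor σ, hfactor τ]
  simp only [prod_min_finRotate_eq hn _ (fun j => ψm (x j)),
    prod_max_finRotate_eq hn _ (fun j => ψp (x j)), hP, hV]

/-- For `x₁ ≤ x₂ ≤ ⋯ ≤ xₙ` in `[a, b]` and circular `n`-permutations `σ`, `τ` with the
same pinnacle set and the same vale set, the two cyclic products of values of
`G(s,t) = -(1/W)·ψ₋(min{s,t})·ψ₊(max{s,t})` coincide. -/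
theorem cyclic_products_eq_of_same_pinnacles_vales
    (n : ℕ) (a b : ℝ) (x : Fin n → ℝ) (hx : Monotone x)
    (hxab : ∀ i, x i ∈ Set.Icc a b)
    (ψm ψp : ℝ → ℝ) (W : ℝ) (hW : W ≠ 0)
    (G : ℝ → ℝ → ℝ)
    (hG : ∀ s t, G s t = -(1 / W) * ψm (min s t) * ψp (max s t))
    (σ τ : Equiv.Perm (Fin n))
    (hP : pinnacleSet n σ = pinnacleSet n τ) (hV : valeSet n σ = valeSet n τ) :
    ∏ i : Fin n, G (x (σ i)) (x (σ (finRotate n i)))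
      = ∏ i : Fin n, G (x (τ i)) (x (τ (finRotate n i))) :=
  cyclic_products_eq_of_same_pinnacles_vales_general n x hx ψm ψp W G hG σ τ hP hV
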